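/- arXiv:1807.05414 — 2 statements merged into one kernel-verified Lean document; each statement's English description precedes it below -/
import Mathlib

section
/- Let Ω = {0,1}^ℤ and let ν be a probability measure on Ω that is invariant under the map η ↦ η^{x,x+1} swapping coordinates x and x+1. Let f : Ω → [0,∞) be ν-integrable, g a bounded measurable function, and h a bounded measurable function satisfying h(η^{x,x+1}) = h(η) for all η. Then for every β > 0, ∫ f·h·(g∘σ − g) dν ≤ β ∫ (√(f∘σ) − √f)² dν + (1/β) ∫ (g² + (g∘σ)²)·f·h² dν, where σ(η) = η^{x,x+1}. -/
/-!
Because `σ = swapConf x` preserves `ν` and fixes `h`, the left side equals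
`∫ (f ∘ σ - f) h g`. Writing `f ∘ σ - f = (√(f ∘ σ) - √f) (√(f ∘ σ) + √f)` and applying the
weighted AM-GM inequality pointwise produces `β (√(f ∘ σ) - √f)²` plus `β⁻¹ (f + f ∘ σ) h² g²`,
and a second change of variables turns `∫ (f ∘ σ) h² g²` into `∫ f h² (g ∘ σ)²`. All integrands
are bounded, hence in `L^∞ ⊆ L¹` for the probability measure `ν`.
-/

open MeasureTheory

/-- The configuration obtained from `η` by exchanging the values at sites `x` and `x+1`. -/
def swapConf (x : ℤ) (η : ℤ → Bool) : ℤ → Bool :=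
  fun y => if y = x then η (x + 1) else if y = x + 1 then η x else η y

theorem swapConf_involutive (x : ℤ) : Function.Involutive (swapConf x) := by
  intro η
  funext y
  simp only [swapConf]
  split_ifs <;> simp_all

theorem sub_mul_le_sq_sqrt_sub_add {a b : ℝ} (ha : 0 ≤ a) (hb : 0 ≤ b) (c : ℝ) {β : ℝ}
    (hβ : 0 < β) :
    (b - a) * c ≤ β * (√b - √a) ^ 2 + 1 / β * ((a + b) * c ^ 2) := by
  obtain ⟨s, hs, rfl⟩ : ∃ s, 0 ≤ s ∧ s ^ 2 = a := ⟨√a, Real.sqrt_nonneg a, Real.sq_sqrt ha⟩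
  obtain ⟨t, ht, rfl⟩ : ∃ t, 0 ≤ t ∧ t ^ 2 = b := ⟨√b, Real.sqrt_nonneg b, Real.sq_sqrt hb⟩
  rw [Real.sqrt_sq hs, Real.sqrt_sq ht, div_mul_eq_mul_div, one_mul, ← sub_le_iff_le_add',
    le_div_iff₀ hβ]
  nlinarith [sq_nonneg (β * (t - s) - (t + s) * c / 2), sq_nonneg ((t - s) * c)]

namespace MeasureTheory.MeasurePreserving

variable {α : Type*} [MeasurableSpace α] {μ : Measure α} {σ : α → α}

theorem integral_comp_mul_of_involutive (hσ : MeasurePreserving σ μ μ)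
    (hinv : Function.Involutive σ) (F G : α → ℝ) :
    ∫ a, F (σ a) * G a ∂μ = ∫ a, F a * G (σ a) ∂μ := by
  rw [← hσ.integral_comp (MeasurableEquiv.ofInvolutive σ hinv hσ.measurable).measurableEmbedding]
  simp only [hinv _]

theorem integrable_comp_mul_of_involutive (hσ : MeasurePreserving σ μ μ)
    (hinv : Function.Involutive σ) {F G : α → ℝ}
    (hFGσ : Integrable (fun a => F a * G (σ a)) μ) :
    Integrable (fun a => F (σ a) * G a) μ := by
  simpa only [Function.comp_def, hinv _] using hσ.integrable_comp_of_integrable hFGσ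

theorem integral_mul_comp_sub_of_involutive (hσ : MeasurePreserving σ μ μ)
    (hinv : Function.Involutive σ) {F G : α → ℝ}
    (hFGσ : Integrable (fun a => F a * G (σ a)) μ) (hFG : Integrable (fun a => F a * G a) μ) :
    ∫ a, F a * (G (σ a) - G a) ∂μ = ∫ a, (F (σ a) - F a) * G a ∂μ := by
  simp only [mul_sub, sub_mul]
  rw [integral_sub hFGσ hFG, integral_sub (hσ.integrable_comp_mul_of_involutive hinv hFGσ) hFG,
    hσ.integral_comp_mul_of_involutive hinv]

theorem integral_add_comp_mul_of_involutive (hσ : MeasurePreserving σ μ μ)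
    (hinv : Function.Involutive σ) {F G : α → ℝ}
    (hFGσ : Integrable (fun a => F a * G (σ a)) μ) (hFG : Integrable (fun a => F a * G a) μ) :
    ∫ a, (F a + F (σ a)) * G a ∂μ = ∫ a, F a * (G a + G (σ a)) ∂μ := by
  simp only [mul_add, add_mul]
  rw [integral_add hFG (hσ.integrable_comp_mul_of_involutive hinv hFGσ), integral_add hFG hFGσ,
    hσ.integral_comp_mul_of_involutive hinv]

end MeasureTheory.MeasurePreserving

/-- Integration-by-parts estimate for the exclusion Dirichlet form. -/
theorem stmt_4 (x : ℤ) (ν : Measure (ℤ → Bool)) [IsProbabilityMeasure ν]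
    (hσ : MeasurePreserving (swapConf x) ν ν)
    (f g h : (ℤ → Bool) → ℝ)
    (hf : Measurable f) (hg : Measurable g) (hh : Measurable h)
    (hf0 : ∀ η, 0 ≤ f η)
    (Mf Mg Mh : ℝ)
    (hfb : ∀ η, f η ≤ Mf) (hgb : ∀ η, |g η| ≤ Mg) (hhb : ∀ η, |h η| ≤ Mh)
    (hinv : ∀ η, h (swapConf x η) = h η)
    (β : ℝ) (hβ : 0 < β) :
    ∫ η, f η * h η * (g (swapConf x η) - g η) ∂ν ≤
      β * ∫ η, (Real.sqrt (f (swapConf x η)) - Real.sqrt (f η)) ^ 2 ∂ν +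
        (1 / β) * ∫ η, (g η ^ 2 + g (swapConf x η) ^ 2) * f η * h η ^ 2 ∂ν := by
  set σ := swapConf x
  have hσσ : Function.Involutive σ := swapConf_involutive x
  have toL1 : ∀ {F : (ℤ → Bool) → ℝ}, MemLp F ⊤ ν → Integrable F ν := (·.integrable le_top)
  have sqLinf : ∀ {F : (ℤ → Bool) → ℝ}, MemLp F ⊤ ν → MemLp (fun η => F η ^ 2) ⊤ ν :=
    fun hF => by simpa only [sq] using hF.mul' hF
  have Lf : MemLp f ⊤ ν := memLp_top_of_bound hf.aestronglyMeasurable Mf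
    (ae_of_all _ fun η => by simpa [abs_of_nonneg (hf0 η)] using hfb η)
  have Lsf : MemLp (fun η => √(f η)) ⊤ ν := memLp_top_of_bound hf.sqrt.aestronglyMeasurable √Mf
    (ae_of_all _ fun η => by
      simpa [abs_of_nonneg (Real.sqrt_nonneg _)] using Real.sqrt_le_sqrt (hfb η))
  have Lhg : MemLp (fun η => h η * g η) ⊤ ν :=
    (memLp_top_of_bound hg.aestronglyMeasurable Mg (ae_of_all _ hgb)).mul'
      (memLp_top_of_bound hh.aestronglyMeasurable Mh (ae_of_all _ hhb))
  have Lfσ := Lf.comp_measurePreserving hσ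
  have Lsfσ := Lsf.comp_measurePreserving hσ
  have Lhgσ := Lhg.comp_measurePreserving hσ
  have hD : Integrable (fun η => (√(f (σ η)) - √(f η)) ^ 2) ν := toL1 (sqLinf (Lsfσ.sub Lsf))
  have hE : Integrable (fun η => (f η + f (σ η)) * (h η * g η) ^ 2) ν :=
    toL1 ((sqLinf Lhg).mul' (Lf.add Lfσ))
  calc ∫ η, f η * h η * (g (σ η) - g η) ∂ν
      = ∫ η, f η * (h (σ η) * g (σ η) - h η * g η) ∂ν := by
        simp only [hinv]
        congr 1 with η
        ring
    _ = ∫ η, (f (σ η) - f η) * (h η * g η) ∂ν :=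
      hσ.integral_mul_comp_sub_of_involutive hσσ (toL1 (Lhgσ.mul' Lf)) (toL1 (Lhg.mul' Lf))
    _ ≤ ∫ η, (β * (√(f (σ η)) - √(f η)) ^ 2 + 1 / β * ((f η + f (σ η)) * (h η * g η) ^ 2)) ∂ν :=
      integral_mono (toL1 (Lhg.mul' (Lfσ.sub Lf))) ((hD.const_mul β).add (hE.const_mul _))
        fun η => sub_mul_le_sq_sqrt_sub_add (hf0 η) (hf0 (σ η)) _ hβ
    _ = β * ∫ η, (√(f (σ η)) - √(f η)) ^ 2 ∂ν
          + 1 / β * ∫ η, (f η + f (σ η)) * (h η * g η) ^ 2 ∂ν := by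
      rw [integral_add (hD.const_mul β) (hE.const_mul _), integral_const_mul, integral_const_mul]
    _ = _ := by
      rw [hσ.integral_add_comp_mul_of_involutive hσσ (toL1 ((sqLinf Lhgσ).mul' Lf))
        (toL1 ((sqLinf Lhg).mul' Lf))]
      simp only [hinv]
      congr 3 with η
      ring
end

section
/- Let μ and ν be probability measures with μ ≪ ν and relative entropy H(μ|ν). For any measurable event B with ν(B) > 0, μ(B) ≤ (H(μ|ν) + log 2) / log(1 + 1/ν(B)). -/
open MeasureTheory

/-!
Young's inequality `a b ≤ a log a - a + eᵇ`, applied pointwise to `a = dμ/dν` and integrated,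
gives the Donsker–Varadhan bound `∫ g dμ ≤ H(μ|ν) + log ∫ e^g dν`. Taking `g = t · 1_B` with
`eᵗ = 1 + 1/ν(B)` makes `∫ e^g dν = 1 + (eᵗ - 1) ν(B) = 2`, so `t μ(B) ≤ H(μ|ν) + log 2`.
-/

theorem Real.mul_le_mul_log_sub_add_exp {a : ℝ} (ha : 0 ≤ a) (b : ℝ) :
    a * b ≤ a * Real.log a - a + Real.exp b := by
  rcases ha.eq_or_lt with rfl | ha
  · simpa using (Real.exp_pos b).le
  · have h := mul_le_mul_of_nonneg_left (Real.add_one_le_exp (b - Real.log a)) ha.le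
    rw [Real.exp_sub, Real.exp_log ha, mul_div_cancel₀ _ ha.ne'] at h
    linarith

theorem Real.exp_indicator_const {α : Type*} (B : Set α) (t : ℝ) :
    (fun x ↦ Real.exp (B.indicator (fun _ ↦ t) x)) =
      fun x ↦ 1 + B.indicator (fun _ ↦ Real.exp t - 1) x := by
  ext x
  by_cases hx : x ∈ B <;> simp [hx]

namespace MeasureTheory

variable {Ω : Type*} [MeasurableSpace Ω] {μ ν : Measure Ω} {g : Ω → ℝ}

theorem integral_le_integral_mul_log_rnDeriv_sub_add_integral_exp
    [IsFiniteMeasure μ] [SigmaFinite ν] (hac : μ ≪ ν)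
    (hent : Integrable (fun ω ↦ (μ.rnDeriv ν ω).toReal * Real.log (μ.rnDeriv ν ω).toReal) ν)
    (hg : Integrable g μ) (hexp : Integrable (fun ω ↦ Real.exp (g ω)) ν) :
    ∫ ω, g ω ∂μ ≤ ∫ ω, (μ.rnDeriv ν ω).toReal * Real.log (μ.rnDeriv ν ω).toReal ∂ν
      - μ.real Set.univ + ∫ ω, Real.exp (g ω) ∂ν := by
  have hf : Integrable (fun ω ↦ (μ.rnDeriv ν ω).toReal) ν := Measure.integrable_toReal_rnDeriv
  have hdiff : Integrable (fun ω ↦ (μ.rnDeriv ν ω).toReal * Real.log (μ.rnDeriv ν ω).toReal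
      - (μ.rnDeriv ν ω).toReal) ν := hent.sub hf
  calc ∫ ω, g ω ∂μ = ∫ ω, (μ.rnDeriv ν ω).toReal * g ω ∂ν := (integral_toReal_rnDeriv_mul hac).symm
    _ ≤ ∫ ω, ((μ.rnDeriv ν ω).toReal * Real.log (μ.rnDeriv ν ω).toReal
          - (μ.rnDeriv ν ω).toReal + Real.exp (g ω)) ∂ν :=
      integral_mono ((integrable_toReal_rnDeriv_mul_iff hac).2 hg) (hdiff.add hexp)
        fun ω ↦ Real.mul_le_mul_log_sub_add_exp ENNReal.toReal_nonneg (g ω)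
    _ = _ := by
      rw [integral_add hdiff hexp, integral_sub hent hf,
        Measure.integral_toReal_rnDeriv hac]

theorem integral_le_integral_mul_log_rnDeriv_add_log_integral_exp
    [IsProbabilityMeasure μ] [SigmaFinite ν] [NeZero ν] (hac : μ ≪ ν)
    (hent : Integrable (fun ω ↦ (μ.rnDeriv ν ω).toReal * Real.log (μ.rnDeriv ν ω).toReal) ν)
    (hg : Integrable g μ) (hexp : Integrable (fun ω ↦ Real.exp (g ω)) ν) :
    ∫ ω, g ω ∂μ ≤ ∫ ω, (μ.rnDeriv ν ω).toReal * Real.log (μ.rnDeriv ν ω).toReal ∂ν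
      + Real.log (∫ ω, Real.exp (g ω) ∂ν) := by
  set Z := ∫ ω, Real.exp (g ω) ∂ν
  -- Young's bound is applied to `g - log Z`, whose exponential integrates to `1`.
  have hZ : 0 < Z := integral_exp_pos hexp
  have hshift : ∫ ω, Real.exp (g ω - Real.log Z) ∂ν = 1 := by
    simp_rw [Real.exp_sub, Real.exp_log hZ]
    rw [integral_div, div_self hZ.ne']
  have h := integral_le_integral_mul_log_rnDeriv_sub_add_integral_exp (g := fun ω ↦ g ω - Real.log Z)
    hac hent (hg.sub (integrable_const _))
    (by simpa [Real.exp_sub, Real.exp_log hZ] using hexp.div_const Z)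
  rw [hshift, integral_sub hg (integrable_const _)] at h
  simp only [integral_const, probReal_univ, smul_eq_mul, one_mul] at h
  linarith

theorem integrable_exp_indicator_const [IsFiniteMeasure ν] {B : Set Ω} (hB : MeasurableSet B)
    (t : ℝ) : Integrable (fun ω ↦ Real.exp (B.indicator (fun _ ↦ t) ω)) ν := by
  rw [Real.exp_indicator_const]
  exact (integrable_const 1).add ((integrable_const _).indicator hB)

theorem integral_exp_indicator_const [IsProbabilityMeasure ν] {B : Set Ω} (hB : MeasurableSet B)
    (t : ℝ) :
    ∫ ω, Real.exp (B.indicator (fun _ ↦ t) ω) ∂ν = 1 + (Real.exp t - 1) * ν.real B := by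
  rw [Real.exp_indicator_const, integral_add (integrable_const 1) ((integrable_const _).indicator hB),
    integral_indicator_const _ hB]
  simp [mul_comm]

end MeasureTheory

/-- Entropy inequality for events: `μ(B) ≤ (H(μ|ν) + log 2) / log(1 + 1/ν(B))`. -/
theorem stmt_7 {Ω : Type*} [MeasurableSpace Ω] (μ ν : Measure Ω)
    [IsProbabilityMeasure μ] [IsProbabilityMeasure ν] (hac : μ ≪ ν)
    (Hent : ℝ)
    (hH : Hent = ∫ ω, (μ.rnDeriv ν ω).toReal * Real.log (μ.rnDeriv ν ω).toReal ∂ν)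
    (hInt : Integrable (fun ω => (μ.rnDeriv ν ω).toReal * Real.log (μ.rnDeriv ν ω).toReal) ν)
    (B : Set Ω) (hB : MeasurableSet B) (hBpos : 0 < (ν B).toReal) :
    (μ B).toReal ≤ (Hent + Real.log 2) / Real.log (1 + 1 / (ν B).toReal) := by
  set t := Real.log (1 + 1 / (ν B).toReal)
  have ht : 0 < t := Real.log_pos (by simpa using hBpos)
  have hZ : ∫ ω, Real.exp (B.indicator (fun _ ↦ t) ω) ∂ν = 2 := by
    rw [integral_exp_indicator_const hB, Real.exp_log (by positivity), measureReal_def]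
    field_simp
    ring
  have h := integral_le_integral_mul_log_rnDeriv_add_log_integral_exp hac hInt
    ((integrable_const t).indicator hB) (integrable_exp_indicator_const hB t)
  rw [integral_indicator_const _ hB, hZ, smul_eq_mul, measureReal_def, ← hH] at h
  rw [le_div_iff₀ ht]
  linarith
end
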